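/- arXiv:1001.3192 — 4 statements merged into one kernel-verified Lean document; each statement's English description precedes it below -/
import Mathlib

section
/- Let Γ: A = ⊕_{g∈G} A_g and Γ̄: A = ⊕_{h∈H} Ā_h be gradings of an algebra A by abelian groups G and H, each generated by the support of its respective grading, over an algebraically closed field of characteristic p, with neither G nor H containing elements of order p. If η_{Γ̄}(Ĥ) ⊆ η_Γ(Ĝ) (where η sends characters to the corresponding diagonal automorphisms), then Γ̄ is a coarsening of Γ: there is a group homomorphism φ: G → H with Ā_{φ(g)} ⊇ A_g for all g in the support of Γ, and φ maps the support of Γ onto the support of Γ̄. -/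
attribute [local instance] Classical.propDecidable

/-!
Characters `H →* Fˣ` separate the points of `H`: a character of the cyclic group generated by
`h ≠ 1` sends `h` to a root of unity of order `orderOf h` (which exists since that order is prime
to `p`), or to any `u ≠ 1` if `h` has infinite order, and it extends to `H` because `Fˣ` is
divisible. Hence the common eigenspaces of `η_Γ̄(Ĥ)` are exactly the components `Ā_h`.
If `η_Γ̄(χ) = η_Γ(ζ χ)`, a nonzero component `A_g` is a common eigenspace of `η_Γ̄(Ĥ)` with
eigenvalues `χ ↦ ζ χ g`, so `A_g ⊆ Ā_h` for the unique `h` with `χ h = ζ χ g` for all `χ`.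
The pairs `(g, h)` with `ζ χ g = χ h` for all `χ` form a subgroup of `G × H`, which by separation is
the graph of a homomorphism `φ` as soon as its projection to `G` contains the support of `Γ`.
-/

noncomputable instance IsAlgClosed.divisibleByAdditiveUnits {F : Type*} [Field F]
    [IsAlgClosed F] : DivisibleBy (Additive Fˣ) ℤ :=
  @AddGroup.divisibleByIntOfDivisibleByNat _ _ <| divisibleByOfSMulRightSurj _ _ fun {n} hn a => by
    obtain ⟨z, hz⟩ := IsAlgClosed.exists_pow_nat_eq (a.toMul : F) (Nat.pos_of_ne_zero hn)
    have hz0 : z ≠ 0 := by rintro rfl; exact a.toMul.ne_zero (by rw [← hz, zero_pow hn])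
    refine ⟨.ofMul (Units.mk0 z hz0), ?_⟩
    change n • _ = a
    rw [← ofMul_pow, ← ofMul_toMul a]
    congr 1
    ext
    simpa using hz

theorem MonoidHom.exists_comp_eq_of_ker_le {P H M : Type*} [Group P] [CommGroup H] [CommGroup M]
    [DivisibleBy (Additive M) ℤ] (φ : P →* H) (ψ : P →* M) (hker : φ.ker ≤ ψ.ker) :
    ∃ χ : H →* M, χ.comp φ = ψ := by
  let f : φ.range →* M := φ.rangeRestrict.liftOfSurjective φ.rangeRestrict_surjective
    ⟨ψ, by rwa [MonoidHom.ker_rangeRestrict]⟩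
  obtain ⟨χ, hχ⟩ := (Module.Baer.of_divisible (Additive M)).extension_property_addMonoidHom
    (MonoidHom.toAdditive φ.range.subtype) φ.range.subtype_injective (MonoidHom.toAdditive f)
  refine ⟨MonoidHom.toAdditive.symm χ, MonoidHom.ext fun x => ?_⟩
  have := DFunLike.congr_fun hχ (Additive.ofMul (φ.rangeRestrict x))
  simp only [f, AddMonoidHom.coe_comp, Function.comp_apply, MonoidHom.toAdditive_apply_apply,
    toMul_ofMul, Subgroup.coe_subtype, MonoidHom.liftOfRightInverse_comp_apply] at this
  exact congrArg Additive.toMul this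

section Characters

variable {F H : Type*} [Field F] [IsAlgClosed F] {p : ℕ} [CharP F p] [CommGroup H]

theorem exists_units_ne_one_forall_zpow_eq_one (hHp : ∀ h : H, orderOf h ≠ p) {h : H}
    (hh : h ≠ 1) : ∃ u : Fˣ, u ≠ 1 ∧ ∀ k : ℤ, h ^ k = 1 → u ^ k = 1 := by
  by_cases hn : orderOf h = 0
  · obtain ⟨a, ha⟩ := Infinite.exists_notMem_finset ({0, 1} : Finset F)
    simp only [Finset.mem_insert, Finset.mem_singleton, not_or] at ha
    refine ⟨Units.mk0 a ha.1, fun h1 => ha.2 (by simpa using congrArg Units.val h1), fun k hk => ?_⟩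
    rw [← orderOf_dvd_iff_zpow_eq_one, hn, Nat.cast_zero, zero_dvd_iff] at hk
    rw [hk, zpow_zero]
  · have hpn : ¬ p ∣ orderOf h := fun hdvd => hHp _ (orderOf_pow_orderOf_div hn hdvd)
    have : NeZero (orderOf h : F) := ⟨fun h0 => hpn ((CharP.cast_eq_zero_iff F p _).mp h0)⟩
    obtain ⟨ζ, hζ⟩ := HasEnoughRootsOfUnity.exists_primitiveRoot F (orderOf h)
    obtain ⟨u, hu⟩ : ∃ u : Fˣ, IsPrimitiveRoot u (orderOf h) := ⟨_, hζ.isUnit_unit hn⟩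
    refine ⟨u, fun h1 => hh ?_, fun k hk => ?_⟩
    · rw [← orderOf_eq_one_iff, hu.eq_orderOf, h1, orderOf_one]
    · rwa [← orderOf_dvd_iff_zpow_eq_one, ← hu.eq_orderOf, orderOf_dvd_iff_zpow_eq_one]

theorem exists_monoidHom_units_apply_ne_one (hHp : ∀ h : H, orderOf h ≠ p) {h : H}
    (hh : h ≠ 1) : ∃ χ : H →* Fˣ, χ h ≠ 1 := by
  obtain ⟨u, hu1, hu⟩ := exists_units_ne_one_forall_zpow_eq_one (F := F) hHp hh
  obtain ⟨χ, hχ⟩ := (zpowersHom H h).exists_comp_eq_of_ker_le (zpowersHom Fˣ u)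
    fun k hk => by simpa using hu _ (by simpa using hk)
  have hχh : χ h = u := by simpa using DFunLike.congr_fun hχ (Multiplicative.ofAdd 1)
  exact ⟨χ, hχh ▸ hu1⟩

theorem eq_of_forall_monoidHom_units_apply_eq (hHp : ∀ h : H, orderOf h ≠ p) {h h' : H}
    (hhh : ∀ χ : H →* Fˣ, χ h = χ h') : h = h' := by
  by_contra hne
  obtain ⟨χ, hχ⟩ := exists_monoidHom_units_apply_ne_one (F := F) hHp (mul_inv_eq_one.not.mpr hne)
  exact hχ (by rw [map_mul, map_inv, hhh, mul_inv_cancel])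

end Characters

theorem MonoidHom.exists_eq_comp_of_forall_exists {G H M : Type*} [Group G] [Group H] [Monoid M]
    (ζ : (H →* M) → G →* M) (hsep : ∀ h h' : H, (∀ χ : H →* M, χ h = χ h') → h = h')
    {S : Set G} (hS : Subgroup.closure S = ⊤) (hζ : ∀ g ∈ S, ∃ h, ∀ χ, ζ χ g = χ h) :
    ∃ φ : G →* H, ∀ χ, ζ χ = χ.comp φ := by
  let K : Subgroup (G × H) := ⨅ χ, ((ζ χ).comp (fst G H)).eqLocus (χ.comp (snd G H))
  have mem_K {q : G × H} : q ∈ K ↔ ∀ χ, ζ χ q.1 = χ q.2 := Subgroup.mem_iInf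
  have hinj : Function.Injective (Prod.fst ∘ K.subtype) := by
    rintro ⟨⟨g, h⟩, hq⟩ ⟨⟨g', h'⟩, hq'⟩ (rfl : g = g')
    obtain rfl : h = h' := hsep h h' fun χ => (mem_K.mp hq χ).symm.trans (mem_K.mp hq' χ)
    rfl
  have hsurj : Function.Surjective (Prod.fst ∘ K.subtype) := by
    have hS_le : Subgroup.closure S ≤ ((fst G H).comp K.subtype).range := by
      rw [Subgroup.closure_le]
      intro g hg
      obtain ⟨h, hh⟩ := hζ g hg
      exact ⟨⟨(g, h), mem_K.mpr hh⟩, rfl⟩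
    rw [hS] at hS_le
    exact fun g => hS_le (Subgroup.mem_top g)
  obtain ⟨φ, hφ⟩ := Subgroup.exists_eq_graph ⟨hinj, hsurj⟩
  refine ⟨φ, fun χ => MonoidHom.ext fun g => (mem_K (q := (g, φ g))).mp ?_ χ⟩
  rw [hφ]
  exact MonoidHom.mem_graph.mpr rfl

open DirectSum

section Decomposition

variable {ι R A : Type*} [Semiring R] [AddCommMonoid A] [Module R A]
  (𝒟 : ι → Submodule R A) [Decomposition 𝒟]

theorem DirectSum.decompose_map_of_forall_mem_eq_smul {e : A →ₗ[R] A} {c : ι → R}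
    (hc : ∀ i, ∀ y ∈ 𝒟 i, e y = c i • y) (x : A) (i : ι) :
    (decompose 𝒟 (e x) i : A) = c i • (decompose 𝒟 x i : A) := by
  induction x using Decomposition.inductionOn 𝒟 with
  | zero => simp
  | @homogeneous j y =>
    obtain ⟨y, hy⟩ := y
    have hcy : c j • y ∈ 𝒟 j := Submodule.smul_mem _ _ hy
    rw [hc _ _ hy]
    by_cases hji : j = i
    · subst hji
      rw [decompose_of_mem_same _ hy, decompose_of_mem_same _ hcy]
    · rw [decompose_of_mem_ne _ hy hji, decompose_of_mem_ne _ hcy hji, smul_zero]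
  | add y y' hy hy' => simp [decompose_add, hy, hy', smul_add]

theorem DirectSum.mem_of_forall_decompose_eq_zero {x : A} {i : ι}
    (hx : ∀ j, j ≠ i → decompose 𝒟 x j = 0) : x ∈ 𝒟 i := by
  have : decompose 𝒟 x = of (fun i => 𝒟 i) i (decompose 𝒟 x i) := by
    ext j
    by_cases hj : j = i
    · subst hj; simp
    · rw [hx j hj, of_eq_of_ne _ _ _ hj]
  rw [← (decompose 𝒟).symm_apply_apply x, this, decompose_symm_of]
  exact SetLike.coe_mem _

theorem DirectSum.exists_decompose_ne_zero {x : A} (hx : x ≠ 0) : ∃ i, decompose 𝒟 x i ≠ 0 := by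
  by_contra! h
  exact hx ((decompose 𝒟).injective (by ext i; simp [h i]))

end Decomposition

section Eigenvalues

variable {ι X F A : Type*} [Field F] [AddCommGroup A] [Module F A]
  (𝒟 : ι → Submodule F A) [Decomposition 𝒟]

theorem DirectSum.eq_of_eq_smul_of_decompose_ne_zero {e : A →ₗ[F] A} {c : ι → F}
    (hc : ∀ i, ∀ y ∈ 𝒟 i, e y = c i • y) {a : F} {x : A} (hx : e x = a • x) {i : ι}
    (hi : decompose 𝒟 x i ≠ 0) : c i = a := by
  have h := decompose_map_of_forall_mem_eq_smul 𝒟 hc x i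
  rw [hx, decompose_smul, DirectSum.smul_apply, Submodule.coe_smul] at h
  exact smul_left_injective F (by simpa using hi) h.symm

theorem DirectSum.exists_ne_bot_forall_eq_of_forall_eq_smul {e : X → A →ₗ[F] A}
    {c : X → ι → F} (hc : ∀ χ i, ∀ y ∈ 𝒟 i, e χ y = c χ i • y) {a : X → F} {x : A}
    (hx : ∀ χ, e χ x = a χ • x) (hx0 : x ≠ 0) : ∃ i, 𝒟 i ≠ ⊥ ∧ ∀ χ, c χ i = a χ := by
  obtain ⟨i, hi⟩ := exists_decompose_ne_zero 𝒟 hx0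
  refine ⟨i, fun hbot => hi ?_, fun χ => eq_of_eq_smul_of_decompose_ne_zero 𝒟 (hc χ) (hx χ) hi⟩
  simpa [hbot] using (decompose 𝒟 x i).2

theorem DirectSum.mem_of_forall_eq_smul {e : X → A →ₗ[F] A} {c : X → ι → F}
    (hc : ∀ χ i, ∀ y ∈ 𝒟 i, e χ y = c χ i • y) (hsep : ∀ i j, (∀ χ, c χ i = c χ j) → i = j)
    {a : X → F} {x : A} (hx : ∀ χ, e χ x = a χ • x) {i : ι} (hi : ∀ χ, c χ i = a χ) :
    x ∈ 𝒟 i :=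
  mem_of_forall_decompose_eq_zero 𝒟 fun j hji => by
    by_contra hj
    exact hji (hsep j i fun χ => by
      rw [hi, eq_of_eq_smul_of_decompose_ne_zero 𝒟 (hc χ) (hx χ) hj])

end Eigenvalues

theorem coarsening_of_eta_subset_general
    {F : Type*} [Field F] [IsAlgClosed F] {p : ℕ} [CharP F p]
    {G H : Type*} [CommGroup G] [CommGroup H]
    (hHp : ∀ h : H, orderOf h ≠ p)
    {A : Type*} [NonUnitalNonAssocRing A] [Module F A]
    (ℬ : G → Submodule F A) (𝒞 : H → Submodule F A)
    (hBint : DirectSum.IsInternal ℬ) (hCint : DirectSum.IsInternal 𝒞)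
    (hBgen : Subgroup.closure {g : G | ℬ g ≠ ⊥} = ⊤)
    (hsub : ∀ χ : H →* Fˣ, ∃ ζ : G →* Fˣ, ∃ e : A →ₗ[F] A,
        (∀ (g : G) (y : A), y ∈ ℬ g → e y = (ζ g : F) • y) ∧
        (∀ (h : H) (y : A), y ∈ 𝒞 h → e y = (χ h : F) • y)) :
    ∃ φ : G →* H,
      (∀ g : G, ℬ g ≠ ⊥ → ℬ g ≤ 𝒞 (φ g)) ∧
      (∀ h : H, 𝒞 h ≠ ⊥ → ∃ g : G, ℬ g ≠ ⊥ ∧ φ g = h) := by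
  choose ζ e hζ hχ using hsub
  have hsep (h h' : H) (hhh : ∀ χ : H →* Fˣ, (χ h : F) = χ h') : h = h' :=
    eq_of_forall_monoidHom_units_apply_eq hHp fun χ => Units.ext (hhh χ)
  let _ := hBint.chooseDecomposition
  let _ := hCint.chooseDecomposition
  have hcomponent (g : G) (hg : ℬ g ≠ ⊥) : ∃ h, (∀ χ, (χ h : F) = ζ χ g) ∧ ℬ g ≤ 𝒞 h := by
    obtain ⟨x, hx, hx0⟩ := Submodule.exists_mem_ne_zero_of_ne_bot hg
    obtain ⟨h, -, hh⟩ := exists_ne_bot_forall_eq_of_forall_eq_smul 𝒞 hχ (hζ · g x hx) hx0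
    exact ⟨h, hh, fun y hy => mem_of_forall_eq_smul 𝒞 hχ hsep (hζ · g y hy) hh⟩
  obtain ⟨φ, hφ⟩ := MonoidHom.exists_eq_comp_of_forall_exists ζ
    (fun h h' hhh => hsep h h' fun χ => congrArg Units.val (hhh χ)) hBgen fun g hg =>
      ⟨_, fun χ => Units.ext ((hcomponent g hg).choose_spec.1 χ).symm⟩
  refine ⟨φ, fun g hg => ?_, fun h hh => ?_⟩
  · obtain ⟨h, hh, hle⟩ := hcomponent g hg
    rwa [hsep (φ g) h fun χ => by rw [hh, hφ]; rfl]
  · obtain ⟨y, hy, hy0⟩ := Submodule.exists_mem_ne_zero_of_ne_bot hh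
    obtain ⟨g, hg, hgh⟩ := exists_ne_bot_forall_eq_of_forall_eq_smul ℬ hζ (hχ · h y hy) hy0
    exact ⟨g, hg, hsep _ _ fun χ => by rw [← hgh χ, hφ]; rfl⟩

/-- Let `Γ : A = ⊕_{g ∈ G} ℬ g` and `Γ̄ : A = ⊕_{h ∈ H} 𝒞 h` be gradings of an algebra `A`
by abelian groups `G`, `H`, each generated by the support of its grading, over an algebraically
closed field of characteristic `p`, neither group having elements of order `p`.
If `η_Γ̄(Ĥ) ⊆ η_Γ(Ĝ)` then `Γ̄` is a coarsening of `Γ`: there is a group homomorphism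
`φ : G → H` with `ℬ g ≤ 𝒞 (φ g)` for `g` in the support of `Γ`, mapping the support of `Γ`
onto the support of `Γ̄`. -/
theorem coarsening_of_eta_subset
    {F : Type*} [Field F] [IsAlgClosed F] {p : ℕ} [CharP F p] (hp : p.Prime)
    {G H : Type*} [CommGroup G] [CommGroup H]
    (hGp : ∀ g : G, orderOf g ≠ p) (hHp : ∀ h : H, orderOf h ≠ p)
    {A : Type*} [NonUnitalNonAssocRing A] [Module F A]
    [SMulCommClass F A A] [IsScalarTower F A A]
    (ℬ : G → Submodule F A) (𝒞 : H → Submodule F A)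
    (hBint : DirectSum.IsInternal ℬ) (hCint : DirectSum.IsInternal 𝒞)
    (hBmul : ∀ (g g' : G) (x y : A), x ∈ ℬ g → y ∈ ℬ g' → x * y ∈ ℬ (g * g'))
    (hCmul : ∀ (h h' : H) (x y : A), x ∈ 𝒞 h → y ∈ 𝒞 h' → x * y ∈ 𝒞 (h * h'))
    (hBgen : Subgroup.closure {g : G | ℬ g ≠ ⊥} = ⊤)
    (hCgen : Subgroup.closure {h : H | 𝒞 h ≠ ⊥} = ⊤)
    (hsub : ∀ χ : H →* Fˣ, ∃ ζ : G →* Fˣ, ∃ e : A →ₗ[F] A,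
        (∀ (g : G) (y : A), y ∈ ℬ g → e y = (ζ g : F) • y) ∧
        (∀ (h : H) (y : A), y ∈ 𝒞 h → e y = (χ h : F) • y)) :
    ∃ φ : G →* H,
      (∀ g : G, ℬ g ≠ ⊥ → ℬ g ≤ 𝒞 (φ g)) ∧
      (∀ h : H, 𝒞 h ≠ ⊥ → ∃ g : G, ℬ g ≠ ⊥ ∧ φ g = h) :=
  coarsening_of_eta_subset_general hHp ℬ 𝒞 hBint hCint hBgen hsub
end

section
/- The decomposition of the Melikyan algebra M(2;n) given by M_{3(a_1,a_2)} = Span{x^(a+ε_i)∂_i : i = 1,2}, M_{(3a_1,3a_2)+(1,1)} = Span{x^(a+ε_i)∂̃_i : i = 1,2}, and M_{(3a_1,3a_2)−(1,1)} = Span{x^(a)}, over all multi-indices a, is a ℤ²-grading of the Lie algebra M(2;n): [M_b, M_c] ⊆ M_{b+c} for all b, c ∈ ℤ². -/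
attribute [local instance] Classical.propDecidable

noncomputable section

def Box (p : ℕ) {m : ℕ} (n : Fin m → ℕ) : Type :=
  {a : Fin m → ℕ // ∀ i, a i ≤ p ^ n i - 1}

abbrev DivO (p : ℕ) {m : ℕ} (n : Fin m → ℕ) (F : Type*) [Field F] : Type _ :=
  Box p n →₀ F

variable {p : ℕ} {m : ℕ} {n : Fin m → ℕ} {F : Type*} [Field F]

def omul (f g : DivO p n F) : DivO p n F :=
  f.sum fun a fa => g.sum fun b gb =>
    if h : ∀ i, a.1 i + b.1 i ≤ p ^ n i - 1 then
      Finsupp.single (⟨fun i => a.1 i + b.1 i, h⟩ : Box p n)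
        (((∏ i, Nat.choose (a.1 i + b.1 i) (a.1 i) : ℕ) : F) * fa * gb)
    else 0

def dpartial (k : Fin m) (f : DivO p n F) : DivO p n F :=
  f.sum fun a fa =>
    if a.1 k ≠ 0 then
      Finsupp.single (⟨fun i => a.1 i - (if i = k then 1 else 0),
        fun i => le_trans (Nat.sub_le _ _) (a.2 i)⟩ : Box p n) fa
    else 0

abbrev WittV (p : ℕ) {m : ℕ} (n : Fin m → ℕ) (F : Type*) [Field F] : Type _ :=
  Fin m → DivO p n F

def wact (D : WittV p n F) (f : DivO p n F) : DivO p n F :=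
  ∑ i, omul (D i) (dpartial i f)

def wbr (D E : WittV p n F) : WittV p n F :=
  fun j => ∑ i, (omul (D i) (dpartial i (E j)) - omul (E i) (dpartial i (D j)))

def wdiv (D : WittV p n F) : DivO p n F :=
  ∑ i, dpartial i (D i)

/-- The Melikyan algebra `M(2;n) = O(2;n) ⊕ W(2;n) ⊕ W̃(2;n)` as a vector space:
a triple `(f, D, Ẽ)`. -/
abbrev MelV (n : Fin 2 → ℕ) (F : Type*) [Field F] : Type _ :=
  DivO 5 n F × WittV 5 n F × WittV 5 n F

variable {n : Fin 2 → ℕ}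

/-- The tilde part of `[f, g]`:
`2(f ∂_1 g - g ∂_1 f) ∂̃_2 + 2(g ∂_2 f - f ∂_2 g) ∂̃_1`. -/
def tld (f g : DivO 5 n F) : WittV 5 n F := fun j =>
  if j = 0 then (2 : F) • (omul g (dpartial 1 f) - omul f (dpartial 1 g))
  else (2 : F) • (omul f (dpartial 0 g) - omul g (dpartial 0 f))

/-- The Melikyan bracket, given by the five structural equations. -/
def mbr (y z : MelV n F) : MelV n F :=
  ( -- O(2;n)-component
    (wact y.2.1 z.1 - (2 : F) • omul (wdiv y.2.1) z.1)
      - (wact z.2.1 y.1 - (2 : F) • omul (wdiv z.2.1) y.1)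
      + (omul (y.2.2 0) (z.2.2 1) - omul (y.2.2 1) (z.2.2 0)),
    -- W(2;n)-component
    wbr y.2.1 z.2.1 + (fun i => omul y.1 (z.2.2 i)) - (fun i => omul z.1 (y.2.2 i)),
    -- W̃(2;n)-component
    (fun i => wbr y.2.1 z.2.2 i + (2 : F) • omul (wdiv y.2.1) (z.2.2 i))
      - (fun i => wbr z.2.1 y.2.2 i + (2 : F) • omul (wdiv z.2.1) (y.2.2 i))
      + tld y.1 z.1 )

/-- degree (in `ℤ²`, grading `Γ̄_M`) of the basis element `x^(a)` of the `O`-part: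
`3a - (1,1)`. -/
def degO (a : Box 5 n) : ℤ × ℤ :=
  (3 * (a.1 0 : ℤ) - 1, 3 * (a.1 1 : ℤ) - 1)

/-- degree of the basis element `x^(a) ∂_i` of the `W`-part: `3(a - ε_i)`. -/
def degW (a : Box 5 n) (i : Fin 2) : ℤ × ℤ :=
  (3 * ((a.1 0 : ℤ) - if i = 0 then 1 else 0),
   3 * ((a.1 1 : ℤ) - if i = 1 then 1 else 0))

/-- degree of the basis element `x^(a) ∂̃_i` of the `W̃`-part: `3(a - ε_i) + (1,1)`. -/
def degT (a : Box 5 n) (i : Fin 2) : ℤ × ℤ :=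
  ((degW a i).1 + 1, (degW a i).2 + 1)

/-- The homogeneous component of degree `b ∈ ℤ²` of the grading `Γ̄_M`. -/
def MHom (F : Type*) [Field F] (n : Fin 2 → ℕ) (b : ℤ × ℤ) : Submodule F (MelV n F) :=
  (Finsupp.supported F F {a | degO a = b}).prod
    ((Submodule.pi Set.univ fun i => Finsupp.supported F F {a | degW a i = b}).prod
      (Submodule.pi Set.univ fun i => Finsupp.supported F F {a | degT a i = b}))

/-- The homogeneous component of degree `i ∈ ℤ` of the canonical `ℤ`-grading. -/
def MHomZ (F : Type*) [Field F] (n : Fin 2 → ℕ) (d : ℤ) : Submodule F (MelV n F) :=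
  (Finsupp.supported F F {a : Box 5 n | 3 * ((a.1 0 : ℤ) + (a.1 1 : ℤ)) - 2 = d}).prod
    ((Submodule.pi Set.univ fun _ =>
        Finsupp.supported F F {a : Box 5 n | 3 * (((a.1 0 : ℤ) + (a.1 1 : ℤ)) - 1) = d}).prod
      (Submodule.pi Set.univ fun _ =>
        Finsupp.supported F F {a : Box 5 n | 3 * (((a.1 0 : ℤ) + (a.1 1 : ℤ)) - 1) + 2 = d}))

end

/-!
Give the monomial `x^(a)` the weight `3a ∈ ℤ²` and `∂_i` the weight `-3ε_i`. Divided-power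
multiplication adds weights and `∂_k` lowers them by `3ε_k`, so the action, bracket and divergence
of `W(2;n)` are homogeneous; this works for any additive weight on exponents. The grading of
`M(2;n)` is this weight on `W`, shifted by `-(1,1)` on `O` and by `+(1,1)` on `W̃`. These shifts are
compatible with the brackets that pair `∂̃_1` with `∂̃_2` (`W̃ × W̃ → O`) or create them from
`O × O` exactly because `3ε_1 + 3ε_2 = 3·(1,1)`. The direct sum property is automatic, since each
component is spanned by a fibre of a degree function on the monomial basis.
-/

namespace DirectSum

variable {R ι : Type*} [Ring R] [DecidableEq ι]

theorem isInternal_supported_fiber {α M : Type*} [AddCommGroup M] [Module R M] (deg : α → ι) :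
    IsInternal fun b => Finsupp.supported M R {a | deg a = b} := by
  rw [isInternal_submodule_iff_iSupIndep_and_iSup_eq_top]
  refine ⟨fun b => ?_, ?_⟩
  · refine Disjoint.mono_right (iSup₂_le fun c hc => Finsupp.supported_mono
      (t := {a | deg a ≠ b}) fun a (ha : deg a = c) => show deg a ≠ b from ha ▸ hc) ?_
    exact Finsupp.disjoint_supported_supported (Set.disjoint_left.2 fun a ha hb => hb ha)
  · rw [← Finsupp.supported_iUnion, eq_top_iff, ← Finsupp.supported_univ]
    exact Finsupp.supported_mono fun a _ => Set.mem_iUnion.2 ⟨deg a, rfl⟩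

theorem isInternal_submodule_prod {M N : Type*} [AddCommGroup M] [Module R M] [AddCommGroup N]
    [Module R N] {A : ι → Submodule R M} {B : ι → Submodule R N} (hA : IsInternal A)
    (hB : IsInternal B) : IsInternal fun i => (A i).prod (B i) := by
  rw [isInternal_submodule_iff_iSupIndep_and_iSup_eq_top] at *
  refine ⟨fun i => ?_, ?_⟩
  · have hle : ⨆ j ≠ i, (A j).prod (B j) ≤ (⨆ j ≠ i, A j).prod (⨆ j ≠ i, B j) :=
      iSup₂_le fun j hj => Submodule.prod_mono (le_iSup₂ (f := fun j _ => A j) j hj)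
        (le_iSup₂ (f := fun j _ => B j) j hj)
    refine Disjoint.mono_right hle ?_
    rw [disjoint_iff, Submodule.prod_inf_prod, (hA.1 i).eq_bot, (hB.1 i).eq_bot,
      Submodule.prod_bot]
  · have hfst : ∀ x : M, (x, (0 : N)) ∈ ⨆ i, (A i).prod (B i) := fun x =>
      Submodule.iSup_induction A (motive := fun x => (x, (0 : N)) ∈ ⨆ i, (A i).prod (B i))
        (hA.2 ▸ Submodule.mem_top) (fun i _ hx => Submodule.mem_iSup_of_mem i ⟨hx, zero_mem _⟩)
        (zero_mem _) fun _ _ hx hx' => by simpa using add_mem hx hx'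
    have hsnd : ∀ y : N, ((0 : M), y) ∈ ⨆ i, (A i).prod (B i) := fun y =>
      Submodule.iSup_induction B (motive := fun y => ((0 : M), y) ∈ ⨆ i, (A i).prod (B i))
        (hB.2 ▸ Submodule.mem_top) (fun i _ hy => Submodule.mem_iSup_of_mem i ⟨zero_mem _, hy⟩)
        (zero_mem _) fun _ _ hy hy' => by simpa using add_mem hy hy'
    exact eq_top_iff.2 fun ⟨x, y⟩ _ => by simpa using add_mem (hfst x) (hsnd y)

theorem isInternal_submodule_pi {κ : Type*} [Finite κ] {M : κ → Type*}
    [∀ k, AddCommGroup (M k)] [∀ k, Module R (M k)] {A : ∀ k, ι → Submodule R (M k)}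
    (hA : ∀ k, IsInternal (A k)) :
    IsInternal fun i => Submodule.pi Set.univ fun k => A k i := by
  classical
  have := Fintype.ofFinite κ
  simp only [isInternal_submodule_iff_iSupIndep_and_iSup_eq_top] at *
  refine ⟨fun i => ?_, ?_⟩
  · have hle : ⨆ j ≠ i, Submodule.pi Set.univ (fun k => A k j) ≤
        Submodule.pi Set.univ fun k => ⨆ j ≠ i, A k j :=
      iSup₂_le fun j hj x hx k _ => le_iSup₂ (f := fun j _ => A k j) j hj (hx k trivial)
    refine Disjoint.mono_right hle (Submodule.disjoint_def.2 fun x hx hx' => funext fun k => ?_)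
    exact Submodule.disjoint_def.1 ((hA k).1 i) _ (hx k trivial) (hx' k trivial)
  · have hsingle : ∀ k (x : M k), Pi.single k x ∈ ⨆ i, Submodule.pi Set.univ fun k => A k i := by
      intro k x
      refine Submodule.iSup_induction (A k)
        (motive := fun x => Pi.single k x ∈ ⨆ i, Submodule.pi Set.univ fun k => A k i)
        ((hA k).2 ▸ Submodule.mem_top) (fun i x hx => Submodule.mem_iSup_of_mem i ?_)
        (by simp) fun _ _ hx hx' => by simpa [Pi.single_add] using add_mem hx hx'
      intro k' _
      rcases eq_or_ne k' k with rfl | hk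
      · simpa using hx
      · simp [hk]
    exact eq_top_iff.2 fun x _ =>
      Finset.univ_sum_single x ▸ Submodule.sum_mem _ fun k _ => hsingle k (x k)

end DirectSum

noncomputable def homogComponent {p m : ℕ} {n : Fin m → ℕ} (F : Type*) [Field F] {G : Type*}
    [AddCommGroup G] (w : (Fin m → ℕ) →+ G) (u : G) : Submodule F (DivO p n F) :=
  Finsupp.supported F F {a | w a.1 = u}

/-- `x^(a) ∂_i` has weight `w a - w ε_i`, so the `i`-th coefficient of a field of weight `u` has
weight `u + w ε_i`. -/
noncomputable def wittHomogComponent {p m : ℕ} {n : Fin m → ℕ} (F : Type*) [Field F] {G : Type*}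
    [AddCommGroup G] (w : (Fin m → ℕ) →+ G) (u : G) : Submodule F (WittV p n F) :=
  Submodule.pi Set.univ fun i => homogComponent F w (u + w (Pi.single i 1))

section Homogeneous

variable {p m : ℕ} {n : Fin m → ℕ} {F : Type*} [Field F] {G : Type*} [AddCommGroup G]
  {w : (Fin m → ℕ) →+ G} {u v : G}

theorem mem_homogComponent_of_eq {f : DivO p n F} (hf : f ∈ homogComponent F w u) (h : u = v) :
    f ∈ homogComponent F w v :=
  h ▸ hf

theorem mem_wittHomogComponent_of_eq {D : WittV p n F} (hD : D ∈ wittHomogComponent F w u)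
    (h : u = v) : D ∈ wittHomogComponent F w v :=
  h ▸ hD

theorem omul_mem_homogComponent {f g : DivO p n F} (hf : f ∈ homogComponent F w u)
    (hg : g ∈ homogComponent F w v) : omul f g ∈ homogComponent F w (u + v) := by
  rw [homogComponent, Finsupp.mem_supported] at hf hg
  refine Submodule.finsuppSum_mem _ _ _ _ fun a ha =>
    Submodule.finsuppSum_mem _ _ _ _ fun b hb => ?_
  split_ifs
  · refine Finsupp.single_mem_supported F _ (show w (a.1 + b.1) = u + v from ?_)
    rw [map_add, hf (Finsupp.mem_support_iff.2 ha), hg (Finsupp.mem_support_iff.2 hb)]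
  · exact zero_mem _

theorem dpartial_mem_homogComponent (k : Fin m) {f : DivO p n F}
    (hf : f ∈ homogComponent F w u) :
    dpartial k f ∈ homogComponent F w (u - w (Pi.single k 1)) := by
  rw [homogComponent, Finsupp.mem_supported] at hf
  refine Submodule.finsuppSum_mem _ _ _ _ fun a ha => ?_
  split_ifs with hak
  · refine Finsupp.single_mem_supported F _ (eq_sub_iff_add_eq.2 ?_)
    have hsplit : (fun i => a.1 i - if i = k then 1 else 0) + Pi.single k 1 = a.1 := by
      funext i
      rcases eq_or_ne i k with rfl | hik
      · simpa using Nat.sub_add_cancel (Nat.pos_of_ne_zero hak)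
      · simp [hik]
    rw [← map_add, hsplit, hf (Finsupp.mem_support_iff.2 ha)]
  · exact zero_mem _

theorem wact_mem_homogComponent {D : WittV p n F} {f : DivO p n F}
    (hD : D ∈ wittHomogComponent F w u) (hf : f ∈ homogComponent F w v) :
    wact D f ∈ homogComponent F w (u + v) :=
  Submodule.sum_mem _ fun i _ => mem_homogComponent_of_eq
    (omul_mem_homogComponent (hD i trivial) (dpartial_mem_homogComponent i hf)) (by abel)

theorem wdiv_mem_homogComponent {D : WittV p n F} (hD : D ∈ wittHomogComponent F w u) :
    wdiv D ∈ homogComponent F w u :=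
  Submodule.sum_mem _ fun i _ => mem_homogComponent_of_eq
    (dpartial_mem_homogComponent i (hD i trivial)) (by abel)

theorem omul_mem_wittHomogComponent {f : DivO p n F} {E : WittV p n F}
    (hf : f ∈ homogComponent F w u) (hE : E ∈ wittHomogComponent F w v) :
    (fun i => omul f (E i)) ∈ wittHomogComponent F w (u + v) := fun i _ =>
  mem_homogComponent_of_eq (omul_mem_homogComponent hf (hE i trivial)) (by abel)

theorem wbr_mem_wittHomogComponent {D E : WittV p n F} (hD : D ∈ wittHomogComponent F w u)
    (hE : E ∈ wittHomogComponent F w v) : wbr D E ∈ wittHomogComponent F w (u + v) := by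
  intro j _
  refine Submodule.sum_mem _ fun i _ => sub_mem ?_ ?_
  · exact mem_homogComponent_of_eq (omul_mem_homogComponent (hD i trivial)
      (dpartial_mem_homogComponent i (hE j trivial))) (by abel)
  · exact mem_homogComponent_of_eq (omul_mem_homogComponent (hE i trivial)
      (dpartial_mem_homogComponent i (hD j trivial))) (by abel)

end Homogeneous

def melikyanWeight : (Fin 2 → ℕ) →+ ℤ × ℤ where
  toFun a := (3 * a 0, 3 * a 1)
  map_zero' := by simp
  map_add' a b := by ext <;> simp <;> ring

theorem melikyanWeight_single_add_single :
    melikyanWeight (Pi.single 0 1) + melikyanWeight (Pi.single 1 1) = 3 • (1, 1) := by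
  simp [melikyanWeight]

section Melikyan

variable {F : Type*} [Field F] {n : Fin 2 → ℕ} {b c : ℤ × ℤ}

theorem degO_eq (a : Box 5 n) : degO a = melikyanWeight a.1 - (1, 1) := by
  ext <;> simp [degO, melikyanWeight]

theorem degW_eq (a : Box 5 n) (i : Fin 2) :
    degW a i = melikyanWeight a.1 - melikyanWeight (Pi.single i 1) := by
  fin_cases i <;> ext <;> simp [degW, melikyanWeight] <;> ring

theorem degT_eq (a : Box 5 n) (i : Fin 2) : degT a i = degW a i + (1, 1) :=
  rfl

theorem MHom_eq (b : ℤ × ℤ) :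
    MHom F n b = (homogComponent F melikyanWeight (b + (1, 1))).prod
      ((wittHomogComponent F melikyanWeight b).prod
        (wittHomogComponent F melikyanWeight (b - (1, 1)))) := by
  simp only [MHom, degT_eq, degO_eq, degW_eq, ← eq_sub_iff_add_eq, sub_eq_iff_eq_add]
  rfl

theorem tld_mem_wittHomogComponent {f g : DivO 5 n F}
    (hf : f ∈ homogComponent F melikyanWeight b) (hg : g ∈ homogComponent F melikyanWeight c) :
    tld f g ∈ wittHomogComponent F melikyanWeight (b + c - 3 • (1, 1)) := by
  rw [← melikyanWeight_single_add_single]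
  intro j _
  fin_cases j <;> refine Submodule.smul_mem _ _ (sub_mem ?_ ?_)
  · exact mem_homogComponent_of_eq
      (omul_mem_homogComponent hg (dpartial_mem_homogComponent 1 hf)) (by abel)
  · exact mem_homogComponent_of_eq
      (omul_mem_homogComponent hf (dpartial_mem_homogComponent 1 hg)) (by abel)
  · exact mem_homogComponent_of_eq
      (omul_mem_homogComponent hf (dpartial_mem_homogComponent 0 hg)) (by abel)
  · exact mem_homogComponent_of_eq
      (omul_mem_homogComponent hg (dpartial_mem_homogComponent 0 hf)) (by abel)

theorem mbr_mem_MHom {y z : MelV n F} (hy : y ∈ MHom F n b) (hz : z ∈ MHom F n c) :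
    mbr y z ∈ MHom F n (b + c) := by
  have key := melikyanWeight_single_add_single
  rw [MHom_eq] at hy hz ⊢
  obtain ⟨hyO, hyW, hyT⟩ := hy
  obtain ⟨hzO, hzW, hzT⟩ := hz
  refine ⟨?_, ?_, ?_⟩
  · refine add_mem (sub_mem (sub_mem ?_ (Submodule.smul_mem _ _ ?_))
      (sub_mem ?_ (Submodule.smul_mem _ _ ?_))) (sub_mem ?_ ?_)
    · exact mem_homogComponent_of_eq (wact_mem_homogComponent hyW hzO) (by abel)
    · exact mem_homogComponent_of_eq
        (omul_mem_homogComponent (wdiv_mem_homogComponent hyW) hzO) (by abel)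
    · exact mem_homogComponent_of_eq (wact_mem_homogComponent hzW hyO) (by abel)
    · exact mem_homogComponent_of_eq
        (omul_mem_homogComponent (wdiv_mem_homogComponent hzW) hyO) (by abel)
    · exact mem_homogComponent_of_eq (omul_mem_homogComponent (hyT 0 trivial) (hzT 1 trivial))
        (by linear_combination key)
    · exact mem_homogComponent_of_eq (omul_mem_homogComponent (hyT 1 trivial) (hzT 0 trivial))
        (by linear_combination key)
  · refine sub_mem (add_mem (wbr_mem_wittHomogComponent hyW hzW) ?_) ?_
    · exact mem_wittHomogComponent_of_eq (omul_mem_wittHomogComponent hyO hzT) (by abel)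
    · exact mem_wittHomogComponent_of_eq (omul_mem_wittHomogComponent hzO hyT) (by abel)
  · refine add_mem (sub_mem (add_mem ?_ ?_) (add_mem ?_ ?_)) ?_
    · exact mem_wittHomogComponent_of_eq (wbr_mem_wittHomogComponent hyW hzT) (by abel)
    · exact Submodule.smul_mem _ (2 : F) (mem_wittHomogComponent_of_eq
        (omul_mem_wittHomogComponent (wdiv_mem_homogComponent hyW) hzT) (by abel))
    · exact mem_wittHomogComponent_of_eq (wbr_mem_wittHomogComponent hzW hyT) (by abel)
    · exact Submodule.smul_mem _ (2 : F) (mem_wittHomogComponent_of_eq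
        (omul_mem_wittHomogComponent (wdiv_mem_homogComponent hzW) hyT) (by abel))
    · exact mem_wittHomogComponent_of_eq (tld_mem_wittHomogComponent hyO hzO) (by abel)

theorem isInternal_MHom :
    DirectSum.IsInternal fun b : ℤ × ℤ => MHom F n b :=
  open DirectSum in
  isInternal_submodule_prod (isInternal_supported_fiber degO)
    (isInternal_submodule_prod
      (isInternal_submodule_pi fun i => isInternal_supported_fiber (degW · i))
      (isInternal_submodule_pi fun i => isInternal_supported_fiber (degT · i)))

end Melikyan

theorem melikyan_Z2_grading_general {n : Fin 2 → ℕ}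
    {F : Type*} [Field F] :
    DirectSum.IsInternal (fun b : ℤ × ℤ => MHom F n b) ∧
    ∀ (b c : ℤ × ℤ) (y z : MelV n F),
      y ∈ MHom F n b → z ∈ MHom F n c → mbr y z ∈ MHom F n (b + c) :=
  ⟨isInternal_MHom, fun _ _ _ _ => mbr_mem_MHom⟩

/-- The decomposition of the Melikyan algebra `M(2;n)` with components
`M_{3a} = Span{x^(a+ε_i)∂_i}`, `M_{3a+(1,1)} = Span{x^(a+ε_i)∂̃_i}`,
`M_{3a-(1,1)} = Span{x^(a)}` is a `ℤ²`-grading of the Lie algebra `M(2;n)`: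
it is a direct sum decomposition and `[M_b, M_c] ⊆ M_{b+c}` for all `b, c ∈ ℤ²`. -/
theorem melikyan_Z2_grading {n : Fin 2 → ℕ} (hn : ∀ i, 1 ≤ n i)
    {F : Type*} [Field F] [IsAlgClosed F] [CharP F 5] :
    DirectSum.IsInternal (fun b : ℤ × ℤ => MHom F n b) ∧
    ∀ (b c : ℤ × ℤ) (y z : MelV n F),
      y ∈ MHom F n b → z ∈ MHom F n c → mbr y z ∈ MHom F n (b + c) :=
  melikyan_Z2_grading_general
end

section
/- The kernel of the homomorphism λ: (F^×)² → Aut M(2;n), defined by letting λ(t) act on the degree-b component of the ℤ²-grading Γ̄_M by the scalar t^b = t_1^{b_1}t_2^{b_2}, equals {(t_1,t_2) ∈ (F^×)² : t_1³ = t_2³ = 1 and t_1t_2 = 1}; in particular the kernel is cyclic of order 3 and is generated by (β, β²) for β a primitive cube root of unity. -/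
attribute [local instance] Classical.propDecidable

/-- Rescale each basis coefficient of an element of `O(2;n)` by a weight. -/
noncomputable def scaleO {n : Fin 2 → ℕ} {F : Type*} [Field F]
    (w : Box 5 n → Fˣ) (f : DivO 5 n F) : DivO 5 n F :=
  f.sum fun a c => Finsupp.single a ((w a : F) * c)

/-- The diagonal map on `M(2;n)` acting on the degree-`b` homogeneous component of the
`ℤ²`-grading `Γ̄_M` by the scalar `w b`. -/
noncomputable def mscale {n : Fin 2 → ℕ} {F : Type*} [Field F]
    (w : ℤ × ℤ → Fˣ) (y : MelV n F) : MelV n F :=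
  (scaleO (fun a => w (degO a)) y.1,
   fun i => scaleO (fun a => w (degW a i)) (y.2.1 i),
   fun i => scaleO (fun a => w (degT a i)) (y.2.2 i))

/-- The map `λ(t)`, `t = (t₁,t₂) ∈ (Fˣ)²`, acting on the degree-`b` component of `Γ̄_M` by
`t^b = t₁^{b₁} t₂^{b₂}`; explicitly `λ(t)(x^(a)∂_i) = t^{3a-3ε_i} x^(a)∂_i`,
`λ(t)(x^(a)∂̃_i) = t^{3a-3ε_i}(t₁t₂) x^(a)∂̃_i`, `λ(t)(x^(a)) = t^{3a}(t₁t₂)⁻¹ x^(a)`. -/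
noncomputable def lam {n : Fin 2 → ℕ} {F : Type*} [Field F]
    (t : Fˣ × Fˣ) : MelV n F → MelV n F :=
  mscale fun b => t.1 ^ b.1 * t.2 ^ b.2

section AuxKernel

variable {n : Fin 2 → ℕ} {F : Type*} [Field F]

lemma scaleO_eq_self (w : Box 5 n → Fˣ) (f : DivO 5 n F)
    (h : ∀ a, (w a : F) = 1) : scaleO w f = f := by
  unfold scaleO
  simp only [h, one_mul]
  exact Finsupp.sum_single f

lemma scaleO_single (w : Box 5 n → Fˣ) (a : Box 5 n) (c : F) :
    scaleO w (Finsupp.single a c) = Finsupp.single a ((w a : F) * c) := by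
  unfold scaleO
  rw [Finsupp.sum_single_index]
  simp

lemma zpow3 (t : Fˣ) (h : t ^ 3 = 1) (k : ℤ) : t ^ (3 * k) = 1 := by
  have h3 : t ^ (3 : ℤ) = 1 := by
    rw [show (3 : ℤ) = ((3 : ℕ) : ℤ) from rfl, zpow_natCast, h]
  rw [zpow_mul, h3, one_zpow]

lemma mem_ker_iff (hn : ∀ i, 1 ≤ n i) (t : Fˣ × Fˣ) :
    (∀ y : MelV n F, lam t y = y) ↔
      (t.1 ^ 3 = 1 ∧ t.2 ^ 3 = 1 ∧ t.1 * t.2 = 1) := by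
  constructor
  · intro h
    have key : ∀ a : Box 5 n,
        (t.1 ^ (degO a).1 * t.2 ^ (degO a).2 : Fˣ) = 1 := by
      intro a
      have h1 := congrArg Prod.fst (h (Finsupp.single a 1, fun _ => 0, fun _ => 0))
      simp only [lam, mscale] at h1
      rw [scaleO_single] at h1
      have h2 := congrArg (fun g => g a) h1
      simp only [Finsupp.single_eq_same, mul_one] at h2
      exact Units.ext h2
    have hb : ∀ i : Fin 2, 1 ≤ 5 ^ n i - 1 := by
      intro i
      have : 5 ≤ 5 ^ n i := by
        calc 5 = 5 ^ 1 := (pow_one 5).symm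
        _ ≤ 5 ^ n i := Nat.pow_le_pow_right (by norm_num) (hn i)
      omega
    set a0 : Box 5 n := ⟨fun _ => 0, fun i => Nat.zero_le _⟩ with ha0
    set a1 : Box 5 n := ⟨fun i => if i = 0 then 1 else 0, fun i => by
      by_cases hi : i = 0
      · simpa [hi] using hb 0
      · simp [hi]⟩ with ha1
    have k0 := key a0
    have k1 := key a1
    have e0 : degO a0 = (-1, -1) := by simp [degO, ha0]
    have e1 : degO a1 = (2, -1) := by
      simp [degO, ha1]
    rw [e0] at k0
    rw [e1] at k1
    have hmul : t.1 * t.2 = 1 := by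
      rw [show ((-1 : ℤ), (-1 : ℤ)).1 = (-1 : ℤ) from rfl,
        show ((-1 : ℤ), (-1 : ℤ)).2 = (-1 : ℤ) from rfl,
        zpow_neg_one, zpow_neg_one, ← mul_inv_rev, inv_eq_one] at k0
      rw [mul_comm]
      exact k0
    have ht2 : t.2 = t.1⁻¹ := eq_inv_of_mul_eq_one_right hmul
    have h13z : t.1 ^ (3 : ℤ) = 1 := by
      rw [show ((2 : ℤ), (-1 : ℤ)).1 = (2 : ℤ) from rfl,
        show ((2 : ℤ), (-1 : ℤ)).2 = (-1 : ℤ) from rfl, ht2] at k1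
      have : t.1 ^ (2 : ℤ) * t.1 ^ (1 : ℤ) = 1 := by
        simpa [zpow_neg, inv_inv] using k1
      rw [← zpow_add] at this
      norm_num at this
      exact this
    have h13 : t.1 ^ 3 = 1 := by
      rw [show (3 : ℤ) = ((3 : ℕ) : ℤ) from rfl, zpow_natCast] at h13z
      exact h13z
    refine ⟨h13, ?_, hmul⟩
    rw [ht2, inv_pow, h13, inv_one]
  · rintro ⟨h1, h2, h3⟩ y
    have ht2 : t.2 = t.1⁻¹ := eq_inv_of_mul_eq_one_right h3
    have hw : ∀ b : ℤ × ℤ, (∃ k : ℤ, b.1 - b.2 = 3 * k) →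
        ((t.1 ^ b.1 * t.2 ^ b.2 : Fˣ) : F) = 1 := by
      rintro b ⟨k, hk⟩
      have : t.1 ^ b.1 * t.2 ^ b.2 = t.1 ^ (b.1 - b.2) := by
        rw [ht2, inv_zpow, ← zpow_neg, ← zpow_add, sub_eq_add_neg]
      rw [this, hk, zpow3 t.1 h1 k]
      exact Units.val_one
    show (mscale _ y) = y
    unfold mscale
    refine Prod.ext ?_ (Prod.ext ?_ ?_)
    · apply scaleO_eq_self
      intro a
      apply hw
      exact ⟨(a.1 0 : ℤ) - (a.1 1 : ℤ), by simp [degO]; ring⟩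
    · funext i
      apply scaleO_eq_self
      intro a
      apply hw
      exact ⟨((a.1 0 : ℤ) - if i = 0 then 1 else 0)
        - ((a.1 1 : ℤ) - if i = 1 then 1 else 0), by simp [degW]; ring⟩
    · funext i
      apply scaleO_eq_self
      intro a
      apply hw
      exact ⟨((a.1 0 : ℤ) - if i = 0 then 1 else 0)
        - ((a.1 1 : ℤ) - if i = 1 then 1 else 0), by simp [degT, degW]; ring⟩

end AuxKernel

/-- The kernel of `λ : (Fˣ)² → Aut M(2;n)` is
`{(t₁,t₂) : t₁³ = t₂³ = 1, t₁t₂ = 1}`; in particular it is cyclic of order 3, equal to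
`{1, (β,β²), (β²,β)}` = the subgroup generated by `(β,β²)`, for `β` a primitive cube root
of unity. -/
theorem lam_kernel {n : Fin 2 → ℕ} (hn : ∀ i, 1 ≤ n i)
    (F : Type*) [Field F] [IsAlgClosed F] [CharP F 5] :
    {t : Fˣ × Fˣ | ∀ y : MelV n F, lam t y = y}
      = {t : Fˣ × Fˣ | t.1 ^ 3 = 1 ∧ t.2 ^ 3 = 1 ∧ t.1 * t.2 = 1} ∧
    ∀ β : Fˣ, IsPrimitiveRoot β 3 →
      {t : Fˣ × Fˣ | ∀ y : MelV n F, lam t y = y}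
        = {((1 : Fˣ), (1 : Fˣ)), (β, β ^ 2), (β ^ 2, β)} ∧
      {t : Fˣ × Fˣ | ∀ y : MelV n F, lam t y = y}
        = (Subgroup.closure {((β, β ^ 2) : Fˣ × Fˣ)} : Subgroup (Fˣ × Fˣ)) := by
  have hker : {t : Fˣ × Fˣ | ∀ y : MelV n F, lam t y = y}
      = {t : Fˣ × Fˣ | t.1 ^ 3 = 1 ∧ t.2 ^ 3 = 1 ∧ t.1 * t.2 = 1} := by
    ext t
    exact mem_ker_iff hn t
  refine ⟨hker, ?_⟩
  intro β hβ
  have hβ3 : β ^ 3 = 1 := hβ.pow_eq_one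
  have hβ3z : β ^ (3 : ℤ) = 1 := by
    rw [show (3 : ℤ) = ((3 : ℕ) : ℤ) from rfl, zpow_natCast, hβ3]
  have hββ2 : β * β ^ 2 = 1 := by rw [← pow_succ', hβ3]
  have hβ2β : β ^ 2 * β = 1 := by rw [← pow_succ, hβ3]
  have hβinv : β⁻¹ = β ^ 2 := inv_eq_of_mul_eq_one_left hβ2β
  have hβ2inv : (β ^ 2)⁻¹ = β := inv_eq_of_mul_eq_one_left hββ2
  have hβ23 : (β ^ 2) ^ 3 = 1 := by
    rw [← pow_mul, show 2 * 3 = 3 * 2 from rfl, pow_mul, hβ3, one_pow]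
  have hthree : {t : Fˣ × Fˣ | ∀ y : MelV n F, lam t y = y}
      = {((1 : Fˣ), (1 : Fˣ)), (β, β ^ 2), (β ^ 2, β)} := by
    rw [hker]
    ext t
    simp only [Set.mem_setOf_eq, Set.mem_insert_iff, Set.mem_singleton_iff]
    constructor
    · rintro ⟨h1, h2, h3⟩
      have ht2 : t.2 = t.1⁻¹ := eq_inv_of_mul_eq_one_right h3
      have hmem : t.1 ∈ Subgroup.zpowers β := by
        rw [hβ.zpowers_eq]
        exact (mem_rootsOfUnity 3 t.1).mpr h1
      obtain ⟨k, hk⟩ := Subgroup.mem_zpowers_iff.mp hmem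
      have hksplit : β ^ k = β ^ (k % 3) := by
        conv_lhs => rw [← Int.mul_ediv_add_emod k 3]
        rw [zpow_add, zpow_mul, hβ3z, one_zpow, one_mul]
      have hrange : k % 3 = 0 ∨ k % 3 = 1 ∨ k % 3 = 2 := by omega
      rcases hrange with hh | hh | hh
      · left
        have ht1 : t.1 = 1 := by rw [← hk, hksplit, hh, zpow_zero]
        exact Prod.ext ht1 (by rw [ht2, ht1, inv_one])
      · right; left
        have ht1 : t.1 = β := by rw [← hk, hksplit, hh, zpow_one]
        exact Prod.ext ht1 (by rw [ht2, ht1, hβinv])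
      · right; right
        have ht1 : t.1 = β ^ 2 := by
          rw [← hk, hksplit, hh, show (2 : ℤ) = ((2 : ℕ) : ℤ) from rfl, zpow_natCast]
        exact Prod.ext ht1 (by rw [ht2, ht1, hβ2inv])
    · rintro (h | h | h) <;> subst h
      · exact ⟨one_pow 3, one_pow 3, one_mul 1⟩
      · exact ⟨hβ3, hβ23, hββ2⟩
      · exact ⟨hβ23, hβ3, hβ2β⟩
  refine ⟨hthree, ?_⟩
  rw [← Subgroup.zpowers_eq_closure]
  ext t
  rw [SetLike.mem_coe, Subgroup.mem_zpowers_iff]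
  constructor
  · intro ht
    rw [hthree] at ht
    simp only [Set.mem_insert_iff, Set.mem_singleton_iff] at ht
    rcases ht with h | h | h <;> subst h
    · exact ⟨0, by simp [Prod.ext_iff]⟩
    · exact ⟨1, by simp⟩
    · refine ⟨2, ?_⟩
      refine Prod.ext ?_ ?_
      · rw [Prod.pow_fst]
        rw [show ((β, β ^ 2).1) = β from rfl,
          show (2 : ℤ) = ((2 : ℕ) : ℤ) from rfl, zpow_natCast]
      · rw [Prod.pow_snd]
        rw [show ((β, β ^ 2).2) = β ^ 2 from rfl,
          show (2 : ℤ) = ((2 : ℕ) : ℤ) from rfl, zpow_natCast,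
          ← pow_mul]
        show β ^ 4 = β
        rw [show 4 = 3 + 1 from rfl, pow_succ, hβ3, one_mul]
  · rintro ⟨k, hk⟩
    rw [hker, ← hk]
    refine ⟨?_, ?_, ?_⟩
    · rw [Prod.pow_fst, show ((β, β ^ 2).1) = β from rfl,
        ← zpow_natCast (β ^ k) 3, ← zpow_mul, mul_comm]
      exact zpow3 β hβ3 k
    · rw [Prod.pow_snd, show ((β, β ^ 2).2) = β ^ 2 from rfl,
        ← zpow_natCast ((β ^ 2) ^ k) 3, ← zpow_mul, mul_comm]
      exact zpow3 (β ^ 2) hβ23 k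
    · rw [Prod.pow_fst, Prod.pow_snd, show ((β, β ^ 2).1) = β from rfl,
        show ((β, β ^ 2).2) = β ^ 2 from rfl, ← mul_zpow, hββ2, one_zpow]
end

section
/- Suppose Ψ ∈ Aut M(2;n) permutes the homogeneous components of the ℤ²-grading Γ̄_M (i.e., normalizes T_M), and write Ψ = Φ∘Ω with Φ(y) ∈ y + M_{(i+1)} for all y ∈ M_i and Ω(M_i) = M_i for all i (canonical ℤ-grading, with filtration M_{(i)} = ⊕_{j≥i}M_j). Then Φ = Id, Ψ(M_i) = M_i for all i ∈ ℤ, and Ψ(W(2;n)) = W(2;n). -/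
attribute [local instance] Classical.propDecidable

/-- `ψ` is an automorphism of the Lie algebra `M(2;n)`: a bijective linear map
preserving the Melikyan bracket. -/
def IsMAut {n : Fin 2 → ℕ} {F : Type*} [Field F] (ψ : MelV n F → MelV n F) : Prop :=
  Function.Bijective ψ ∧
  (∀ y z : MelV n F, ψ (y + z) = ψ y + ψ z) ∧
  (∀ (c : F) (y : MelV n F), ψ (c • y) = c • ψ y) ∧
  (∀ y z : MelV n F, ψ (mbr y z) = mbr (ψ y) (ψ z))

/-- The diagonal map acting on the component `M_i` of the canonical `ℤ`-grading of `M(2;n)`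
by the scalar `w i`. -/
noncomputable def mscaleZ {n : Fin 2 → ℕ} {F : Type*} [Field F]
    (w : ℤ → Fˣ) (y : MelV n F) : MelV n F :=
  (scaleO (fun a => w (3 * ((a.1 0 : ℤ) + (a.1 1 : ℤ)) - 2)) y.1,
   fun i => scaleO (fun a => w (3 * (((a.1 0 : ℤ) + (a.1 1 : ℤ)) - 1))) (y.2.1 i),
   fun i => scaleO (fun a => w (3 * (((a.1 0 : ℤ) + (a.1 1 : ℤ)) - 1) + 2)) (y.2.2 i))

/-- The automorphism `Θ` acting on the canonical degree-`i` component `M_i` by `β^{2i}`. -/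
noncomputable def Theta {n : Fin 2 → ℕ} {F : Type*} [Field F]
    (β : Fˣ) : MelV n F → MelV n F :=
  mscaleZ fun i => β ^ (2 * i)

/-- The term `M_{(d)} = ⊕_{j ≥ d} M_j` of the canonical filtration of `M(2;n)`. -/
noncomputable def Mfilt (F : Type*) [Field F] (n : Fin 2 → ℕ) (d : ℤ) :
    Submodule F (MelV n F) :=
  (Finsupp.supported F F {a : Box 5 n | d ≤ 3 * ((a.1 0 : ℤ) + (a.1 1 : ℤ)) - 2}).prod
    ((Submodule.pi Set.univ fun _ => Finsupp.supported F F
        {a : Box 5 n | d ≤ 3 * (((a.1 0 : ℤ) + (a.1 1 : ℤ)) - 1)}).prod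
      (Submodule.pi Set.univ fun _ => Finsupp.supported F F
        {a : Box 5 n | d ≤ 3 * (((a.1 0 : ℤ) + (a.1 1 : ℤ)) - 1) + 2}))

/-- The `W(2;n)`-part of `M(2;n)`, i.e. the subspace `{(0, D, 0)}`. -/
noncomputable def WsubM (F : Type*) [Field F] (n : Fin 2 → ℕ) : Submodule F (MelV n F) :=
  (⊥ : Submodule F (DivO 5 n F)).prod
    ((⊤ : Submodule F (WittV 5 n F)).prod (⊥ : Submodule F (WittV 5 n F)))

section MelAux

variable {n : Fin 2 → ℕ} {F : Type*} [Field F]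

private lemma filt_self {α : Type*} (f : α →₀ F) (p : α → Prop) [DecidablePred p]
    (h : ∀ a ∈ f.support, p a) : f.filter p = f := by
  ext a
  by_cases hp : p a
  · rw [Finsupp.filter_apply_pos _ _ hp]
  · rw [Finsupp.filter_apply_neg _ _ hp]
    exact (Finsupp.notMem_support_iff.1 fun hs => hp (h a hs)).symm

private lemma filt_zero {α : Type*} (f : α →₀ F) (p : α → Prop) [DecidablePred p]
    (h : ∀ a ∈ f.support, ¬ p a) : f.filter p = 0 := by
  ext a
  by_cases hp : p a
  · rw [Finsupp.filter_apply_pos _ _ hp, Finsupp.zero_apply]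
    exact Finsupp.notMem_support_iff.1 fun hs => h a hs hp
  · rw [Finsupp.filter_apply_neg _ _ hp, Finsupp.zero_apply]

private lemma filt_sum {α γ : Type*} (f : α →₀ F) (g : α → γ) (S : Finset γ)
    (h : ∀ a ∈ f.support, g a ∈ S) :
    ∑ d ∈ S, f.filter (fun a => g a = d) = f := by
  ext a
  have hs : (∑ d ∈ S, f.filter (fun a => g a = d)) a = ∑ d ∈ S, f.filter (fun a => g a = d) a :=
    map_sum (Finsupp.applyAddHom a) _ S
  rw [hs]
  simp only [Finsupp.filter_apply]
  rw [Finset.sum_ite_eq S (g a) (fun _ => f a)]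
  by_cases hm : a ∈ f.support
  · rw [if_pos (h a hm)]
  · simp [Finsupp.notMem_support_iff.1 hm]

/-- A generic "support condition" submodule of `MelV n F`. -/
noncomputable def gsub (pO : Box 5 n → Prop) (pW pT : Box 5 n → Fin 2 → Prop) :
    Submodule F (MelV n F) :=
  (Finsupp.supported F F {a | pO a}).prod
    ((Submodule.pi Set.univ fun i => Finsupp.supported F F {a | pW a i}).prod
      (Submodule.pi Set.univ fun i => Finsupp.supported F F {a | pT a i}))

lemma mem_gsub {pO : Box 5 n → Prop} {pW pT : Box 5 n → Fin 2 → Prop} {y : MelV n F} :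
    y ∈ gsub (F := F) pO pW pT ↔
      (∀ a ∈ y.1.support, pO a) ∧ (∀ i, ∀ a ∈ (y.2.1 i).support, pW a i) ∧
      (∀ i, ∀ a ∈ (y.2.2 i).support, pT a i) := by
  simp only [gsub, Submodule.mem_prod, Submodule.mem_pi, Set.mem_univ, forall_true_left,
    Finsupp.mem_supported, Set.subset_def, Finset.mem_coe, Set.mem_setOf_eq]

lemma MHomZ_eq (d : ℤ) :
    MHomZ F n d = gsub (fun a : Box 5 n => 3 * ((a.1 0 : ℤ) + (a.1 1 : ℤ)) - 2 = d)
      (fun a _ => 3 * (((a.1 0 : ℤ) + (a.1 1 : ℤ)) - 1) = d)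
      (fun a _ => 3 * (((a.1 0 : ℤ) + (a.1 1 : ℤ)) - 1) + 2 = d) := rfl

lemma MHom_eq_s19 (b : ℤ × ℤ) :
    MHom F n b = gsub (fun a => degO a = b) (fun a i => degW a i = b)
      (fun a i => degT a i = b) := rfl

lemma Mfilt_eq (d : ℤ) :
    Mfilt F n d = gsub (fun a : Box 5 n => d ≤ 3 * ((a.1 0 : ℤ) + (a.1 1 : ℤ)) - 2)
      (fun a _ => d ≤ 3 * (((a.1 0 : ℤ) + (a.1 1 : ℤ)) - 1))
      (fun a _ => d ≤ 3 * (((a.1 0 : ℤ) + (a.1 1 : ℤ)) - 1) + 2) := rfl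

/-- Generic componentwise filtering of an element of `MelV n F`. -/
noncomputable def fproj (pO : Box 5 n → Prop) (pW pT : Box 5 n → Fin 2 → Prop)
    (y : MelV n F) : MelV n F :=
  (y.1.filter pO, fun i => (y.2.1 i).filter (fun a => pW a i),
    fun i => (y.2.2 i).filter (fun a => pT a i))

lemma fproj_mem (pO : Box 5 n → Prop) (pW pT : Box 5 n → Fin 2 → Prop) (y : MelV n F) :
    fproj pO pW pT y ∈ gsub (F := F) pO pW pT := by
  rw [mem_gsub]
  simp only [fproj]
  refine ⟨fun a ha => ?_, fun i a ha => ?_, fun i a ha => ?_⟩ <;>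
    · rw [Finsupp.support_filter, Finset.mem_filter] at ha
      exact ha.2

lemma fproj_mem_of_mem {pO qO : Box 5 n → Prop} {pW pT qW qT : Box 5 n → Fin 2 → Prop}
    {y : MelV n F} (hy : y ∈ gsub qO qW qT) : fproj pO pW pT y ∈ gsub (F := F) qO qW qT := by
  rw [mem_gsub] at hy ⊢
  simp only [fproj]
  refine ⟨fun a ha => ?_, fun i a ha => ?_, fun i a ha => ?_⟩ <;>
    rw [Finsupp.support_filter, Finset.mem_filter] at ha
  · exact hy.1 a ha.1
  · exact hy.2.1 i a ha.1
  · exact hy.2.2 i a ha.1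

lemma fproj_eq_self {pO : Box 5 n → Prop} {pW pT : Box 5 n → Fin 2 → Prop} {y : MelV n F}
    (hy : y ∈ gsub (F := F) pO pW pT) : fproj pO pW pT y = y := by
  rw [mem_gsub] at hy
  obtain ⟨h1, h2, h3⟩ := hy
  refine Prod.ext ?_ (Prod.ext ?_ ?_)
  · exact filt_self _ _ h1
  · exact funext fun i => filt_self _ _ (h2 i)
  · exact funext fun i => filt_self _ _ (h3 i)

lemma fproj_eq_zero {pO qO : Box 5 n → Prop} {pW pT qW qT : Box 5 n → Fin 2 → Prop}
    {y : MelV n F} (hy : y ∈ gsub (F := F) qO qW qT)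
    (hO : ∀ a, qO a → ¬ pO a) (hW : ∀ a i, qW a i → ¬ pW a i)
    (hT : ∀ a i, qT a i → ¬ pT a i) : fproj pO pW pT y = 0 := by
  rw [mem_gsub] at hy
  obtain ⟨h1, h2, h3⟩ := hy
  refine Prod.ext ?_ (Prod.ext ?_ ?_)
  · exact filt_zero _ _ fun a ha => hO a (h1 a ha)
  · exact funext fun i => filt_zero _ _ fun a ha => hW a i (h2 i a ha)
  · exact funext fun i => filt_zero _ _ fun a ha => hT a i (h3 i a ha)

lemma gsub_eq_zero {pO qO : Box 5 n → Prop} {pW pT qW qT : Box 5 n → Fin 2 → Prop}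
    {y : MelV n F} (hp : y ∈ gsub (F := F) pO pW pT) (hq : y ∈ gsub (F := F) qO qW qT)
    (hO : ∀ a, pO a → qO a → False) (hW : ∀ a i, pW a i → qW a i → False)
    (hT : ∀ a i, pT a i → qT a i → False) : y = 0 := by
  rw [mem_gsub] at hp hq
  refine Prod.ext ?_ (Prod.ext ?_ ?_)
  · exact Finsupp.support_eq_empty.1 (Finset.eq_empty_of_forall_notMem fun a ha =>
      hO a (hp.1 a ha) (hq.1 a ha))
  · exact funext fun i => Finsupp.support_eq_empty.1 (Finset.eq_empty_of_forall_notMem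
      fun a ha => hW a i (hp.2.1 i a ha) (hq.2.1 i a ha))
  · exact funext fun i => Finsupp.support_eq_empty.1 (Finset.eq_empty_of_forall_notMem
      fun a ha => hT a i (hp.2.2 i a ha) (hq.2.2 i a ha))

lemma fproj_zero (pO : Box 5 n → Prop) (pW pT : Box 5 n → Fin 2 → Prop) :
    fproj pO pW pT (0 : MelV n F) = 0 := by
  refine Prod.ext ?_ (Prod.ext ?_ ?_)
  · exact Finsupp.filter_zero _
  · exact funext fun i => Finsupp.filter_zero _
  · exact funext fun i => Finsupp.filter_zero _

lemma fproj_add (pO : Box 5 n → Prop) (pW pT : Box 5 n → Fin 2 → Prop) (y z : MelV n F) :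
    fproj pO pW pT (y + z) = fproj pO pW pT y + fproj pO pW pT z := by
  refine Prod.ext ?_ (Prod.ext ?_ ?_)
  · exact Finsupp.filter_add
  · exact funext fun i => Finsupp.filter_add
  · exact funext fun i => Finsupp.filter_add

lemma fproj_sub (pO : Box 5 n → Prop) (pW pT : Box 5 n → Fin 2 → Prop) (y z : MelV n F) :
    fproj pO pW pT (y - z) = fproj pO pW pT y - fproj pO pW pT z := by
  refine Prod.ext ?_ (Prod.ext ?_ ?_)
  · exact Finsupp.filter_sub _ _ _
  · exact funext fun i => Finsupp.filter_sub _ _ _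
  · exact funext fun i => Finsupp.filter_sub _ _ _

lemma fproj_sum {ι : Type*} (pO : Box 5 n → Prop) (pW pT : Box 5 n → Fin 2 → Prop)
    (s : Finset ι) (f : ι → MelV n F) :
    fproj pO pW pT (∑ i ∈ s, f i) = ∑ i ∈ s, fproj pO pW pT (f i) := by
  classical
  induction s using Finset.cons_induction with
  | empty => simpa using fproj_zero pO pW pT
  | cons a s ha ih => rw [Finset.sum_cons, Finset.sum_cons, fproj_add, ih]

variable {γ : Type*}

/-- Projection onto the degree-`d` part for a degree assignment. -/
noncomputable def dproj (DO : Box 5 n → γ) (DW DT : Box 5 n → Fin 2 → γ) (d : γ)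
    (y : MelV n F) : MelV n F :=
  fproj (fun a => DO a = d) (fun a i => DW a i = d) (fun a i => DT a i = d) y

/-- The finite set of degrees appearing in `y`. -/
noncomputable def degSet (DO : Box 5 n → γ) (DW DT : Box 5 n → Fin 2 → γ) (y : MelV n F) :
    Finset γ :=
  y.1.support.image DO ∪
    Finset.univ.biUnion (fun i => (y.2.1 i).support.image (fun a => DW a i)) ∪
    Finset.univ.biUnion (fun i => (y.2.2 i).support.image (fun a => DT a i))

lemma sum_dproj (DO : Box 5 n → γ) (DW DT : Box 5 n → Fin 2 → γ) (y : MelV n F)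
    (S : Finset γ) (hS : degSet DO DW DT y ⊆ S) :
    ∑ d ∈ S, dproj DO DW DT d y = y := by
  refine Prod.ext ?_ (Prod.ext ?_ ?_)
  · rw [Prod.fst_sum]
    exact filt_sum _ _ _ fun a ha => hS (Finset.mem_union_left _ (Finset.mem_union_left _
      (Finset.mem_image_of_mem DO ha)))
  · rw [Prod.snd_sum, Prod.fst_sum]
    funext i
    rw [Finset.sum_apply]
    exact filt_sum _ _ _ fun a ha => hS (Finset.mem_union_left _ (Finset.mem_union_right _
      (Finset.mem_biUnion.2 ⟨i, Finset.mem_univ i, Finset.mem_image_of_mem _ ha⟩)))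
  · rw [Prod.snd_sum, Prod.snd_sum]
    funext i
    rw [Finset.sum_apply]
    exact filt_sum _ _ _ fun a ha => hS (Finset.mem_union_right _
      (Finset.mem_biUnion.2 ⟨i, Finset.mem_univ i, Finset.mem_image_of_mem _ ha⟩))

lemma dproj_eq_zero {DO : Box 5 n → γ} {DW DT : Box 5 n → Fin 2 → γ} {d e : γ} (hde : d ≠ e)
    {y : MelV n F} (hy : y ∈ gsub (F := F) (fun a => DO a = e) (fun a i => DW a i = e)
      (fun a i => DT a i = e)) :
    dproj DO DW DT d y = 0 :=
  fproj_eq_zero hy (fun _ h1 h2 => hde (h2.symm.trans h1))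
    (fun _ _ h1 h2 => hde (h2.symm.trans h1)) (fun _ _ h1 h2 => hde (h2.symm.trans h1))

/-- The projection onto `MHomZ F n d`. -/
noncomputable def projZ (d : ℤ) : MelV n F → MelV n F :=
  dproj (fun a : Box 5 n => 3 * ((a.1 0 : ℤ) + (a.1 1 : ℤ)) - 2)
    (fun a _ => 3 * (((a.1 0 : ℤ) + (a.1 1 : ℤ)) - 1))
    (fun a _ => 3 * (((a.1 0 : ℤ) + (a.1 1 : ℤ)) - 1) + 2) d

/-- The projection onto `MHom F n b`. -/
noncomputable def projB (b : ℤ × ℤ) : MelV n F → MelV n F :=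
  dproj degO (fun a i => degW a i) (fun a i => degT a i) b

noncomputable def degSetZ (y : MelV n F) : Finset ℤ :=
  degSet (fun a : Box 5 n => 3 * ((a.1 0 : ℤ) + (a.1 1 : ℤ)) - 2)
    (fun a _ => 3 * (((a.1 0 : ℤ) + (a.1 1 : ℤ)) - 1))
    (fun a _ => 3 * (((a.1 0 : ℤ) + (a.1 1 : ℤ)) - 1) + 2) y

noncomputable def degSetB (y : MelV n F) : Finset (ℤ × ℤ) :=
  degSet degO (fun a i => degW a i) (fun a i => degT a i) y

lemma sum_projZ (y : MelV n F) (S : Finset ℤ) (hS : degSetZ y ⊆ S) :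
    ∑ d ∈ S, projZ d y = y :=
  sum_dproj _ _ _ y S hS

lemma sum_projB (y : MelV n F) : ∑ b ∈ degSetB y, projB b y = y :=
  sum_dproj _ _ _ y _ (Finset.Subset.refl _)

lemma projZ_mem (d : ℤ) (y : MelV n F) : projZ d y ∈ MHomZ F n d := by
  rw [MHomZ_eq]; exact fproj_mem _ _ _ y

lemma projB_mem (b : ℤ × ℤ) (y : MelV n F) : projB b y ∈ MHom F n b := by
  rw [MHom_eq_s19]; exact fproj_mem _ _ _ y

lemma projZ_eq_self {d : ℤ} {y : MelV n F} (hy : y ∈ MHomZ F n d) : projZ d y = y := by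
  rw [MHomZ_eq] at hy; exact fproj_eq_self hy

lemma projZ_eq_zero {d e : ℤ} (hde : d ≠ e) {y : MelV n F} (hy : y ∈ MHomZ F n e) :
    projZ d y = 0 := by
  rw [MHomZ_eq] at hy; exact dproj_eq_zero hde hy

lemma projZ_eq_zero_of_filt {d e : ℤ} (hde : d < e) {y : MelV n F} (hy : y ∈ Mfilt F n e) :
    projZ d y = 0 := by
  rw [Mfilt_eq] at hy
  refine fproj_eq_zero hy (fun a h1 h2 => ?_) (fun a i h1 h2 => ?_) (fun a i h1 h2 => ?_)
  · have h1' : e ≤ 3 * ((a.1 0 : ℤ) + (a.1 1 : ℤ)) - 2 := h1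
    have h2' : 3 * ((a.1 0 : ℤ) + (a.1 1 : ℤ)) - 2 = d := h2
    omega
  · have h1' : e ≤ 3 * (((a.1 0 : ℤ) + (a.1 1 : ℤ)) - 1) := h1
    have h2' : 3 * (((a.1 0 : ℤ) + (a.1 1 : ℤ)) - 1) = d := h2
    omega
  · have h1' : e ≤ 3 * (((a.1 0 : ℤ) + (a.1 1 : ℤ)) - 1) + 2 := h1
    have h2' : 3 * (((a.1 0 : ℤ) + (a.1 1 : ℤ)) - 1) + 2 = d := h2
    omega

lemma projB_memZ {i : ℤ} {y : MelV n F} (hy : y ∈ MHomZ F n i) (b : ℤ × ℤ) :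
    projB b y ∈ MHomZ F n i := by
  rw [MHomZ_eq] at hy ⊢; exact fproj_mem_of_mem hy

lemma degW_sum (a : Box 5 n) (i : Fin 2) :
    (degW a i).1 + (degW a i).2 = 3 * (((a.1 0 : ℤ) + (a.1 1 : ℤ)) - 1) := by
  fin_cases i <;> simp [degW] <;> ring

lemma MHom_le_MHomZ {b : ℤ × ℤ} {y : MelV n F} (hy : y ∈ MHom F n b) :
    y ∈ MHomZ F n (b.1 + b.2) := by
  rw [MHom_eq_s19, mem_gsub] at hy
  rw [MHomZ_eq, mem_gsub]
  refine ⟨fun a ha => ?_, fun i a ha => ?_, fun i a ha => ?_⟩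
  · rw [← hy.1 a ha]
    simp only [degO]; ring
  · rw [← hy.2.1 i a ha]
    exact (degW_sum a i).symm
  · rw [← hy.2.2 i a ha]
    simp only [degT]
    rw [show ((degW a i).1 + 1) + ((degW a i).2 + 1) =
      ((degW a i).1 + (degW a i).2) + 2 by ring, degW_sum a i]

lemma MHomZ_inf_Mfilt {d e : ℤ} (hde : d < e) {y : MelV n F} (h1 : y ∈ MHomZ F n d)
    (h2 : y ∈ Mfilt F n e) : y = 0 := by
  rw [MHomZ_eq] at h1; rw [Mfilt_eq] at h2
  exact gsub_eq_zero h1 h2 (fun a p q => by omega) (fun a i p q => by omega)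
    (fun a i p q => by omega)

lemma mem_WsubM {y : MelV n F} : y ∈ WsubM F n ↔ y.1 = 0 ∧ y.2.2 = 0 := by
  simp [WsubM, Submodule.mem_prod]

lemma MHomZ_le_W {d : ℤ} (h3 : (3 : ℤ) ∣ d) {y : MelV n F} (hy : y ∈ MHomZ F n d) :
    y ∈ WsubM F n := by
  rw [MHomZ_eq, mem_gsub] at hy
  rw [mem_WsubM]
  obtain ⟨k, rfl⟩ := h3
  constructor
  · exact Finsupp.support_eq_empty.1 (Finset.eq_empty_of_forall_notMem fun a ha => by
      have := hy.1 a ha; omega)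
  · funext i
    exact Finsupp.support_eq_empty.1 (Finset.eq_empty_of_forall_notMem fun a ha => by
      have := hy.2.2 i a ha; omega)

lemma W_inter {d : ℤ} (h3 : ¬ (3 : ℤ) ∣ d) {y : MelV n F} (hw : y ∈ WsubM F n)
    (hy : y ∈ MHomZ F n d) : y = 0 := by
  rw [mem_WsubM] at hw
  rw [MHomZ_eq, mem_gsub] at hy
  refine Prod.ext hw.1 (Prod.ext ?_ hw.2)
  funext i
  refine Finsupp.support_eq_empty.1 (Finset.eq_empty_of_forall_notMem fun a ha => ?_)
  exact h3 ⟨((a.1 0 : ℤ) + (a.1 1 : ℤ)) - 1, (hy.2.1 i a ha).symm⟩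

lemma WsubM_eq : WsubM F n = gsub (F := F) (fun _ : Box 5 n => False)
    (fun _ _ => True) (fun _ _ => False) := by
  ext y
  rw [mem_WsubM, mem_gsub]
  constructor
  · rintro ⟨h1, h2⟩
    refine ⟨fun a ha => ?_, fun i a _ => trivial, fun i a ha => ?_⟩
    · rw [h1] at ha; simp at ha
    · rw [show y.2.2 i = 0 from by rw [h2]; rfl] at ha; simp at ha
  · rintro ⟨h1, -, h3⟩
    refine ⟨Finsupp.support_eq_empty.1 (Finset.eq_empty_of_forall_notMem h1),
      funext fun i => Finsupp.support_eq_empty.1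
        (Finset.eq_empty_of_forall_notMem (h3 i))⟩

lemma projZ_W {y : MelV n F} (hy : y ∈ WsubM F n) (d : ℤ) : projZ d y ∈ WsubM F n := by
  rw [WsubM_eq] at hy ⊢
  exact fproj_mem_of_mem hy

lemma aut_zero {ψ : MelV n F → MelV n F} (h : IsMAut ψ) : ψ 0 = 0 := by
  simpa using h.2.2.1 0 0

lemma aut_sum {ψ : MelV n F → MelV n F} (h : IsMAut ψ) {ι : Type*} (s : Finset ι)
    (f : ι → MelV n F) : ψ (∑ i ∈ s, f i) = ∑ i ∈ s, ψ (f i) := by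
  classical
  induction s using Finset.cons_induction with
  | empty => simpa using aut_zero h
  | cons a s ha ih => rw [Finset.sum_cons, Finset.sum_cons, h.2.1, ih]

end MelAux

/-- Suppose `Ψ ∈ Aut M(2;n)` permutes the homogeneous components of the `ℤ²`-grading `Γ̄_M`
(i.e. normalizes `T_M`), and `Ψ = Φ ∘ Ω` with `Φ(y) ∈ y + M_{(i+1)}` for `y ∈ M_i` and
`Ω(M_i) = M_i` for all `i`. Then `Φ = Id`, `Ψ(M_i) = M_i` for all `i ∈ ℤ`, and
`Ψ(W(2;n)) = W(2;n)`. -/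
theorem normalizer_preserves_filtration {n : Fin 2 → ℕ} (hn : ∀ i, 1 ≤ n i)
    {F : Type*} [Field F] [IsAlgClosed F] [CharP F 5]
    (Ψ Φ Ω : MelV n F → MelV n F)
    (hΨ : IsMAut Ψ) (hΦ : IsMAut Φ) (hΩ : IsMAut Ω)
    (hperm : ∀ b : ℤ × ℤ, ∃ c : ℤ × ℤ, ∀ y ∈ MHom F n b, Ψ y ∈ MHom F n c)
    (hcomp : Ψ = Φ ∘ Ω)
    (hΦ1 : ∀ i : ℤ, ∀ y ∈ MHomZ F n i, Φ y - y ∈ Mfilt F n (i + 1))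
    (hΩ1 : ∀ i : ℤ, Ω '' (MHomZ F n i : Set (MelV n F)) = (MHomZ F n i : Set (MelV n F))) :
    Φ = id ∧
    (∀ i : ℤ, Ψ '' (MHomZ F n i : Set (MelV n F)) = (MHomZ F n i : Set (MelV n F))) ∧
    Ψ '' (WsubM F n : Set (MelV n F)) = (WsubM F n : Set (MelV n F)) := by
  classical
  have hΨ0 : Ψ 0 = 0 := aut_zero hΨ
  have hΩ0 : Ω 0 = 0 := aut_zero hΩ
  -- Step 1: Ψ maps bihomogeneous elements of ℤ-degree i into MHomZ i.
  have key : ∀ (b : ℤ × ℤ) (i : ℤ) (y : MelV n F), y ∈ MHom F n b → y ∈ MHomZ F n i →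
      Ψ y ∈ MHomZ F n i := by
    intro b i y hyb hyi
    by_cases hy0 : y = 0
    · rw [hy0, hΨ0]; exact zero_mem _
    obtain ⟨c, hc⟩ := hperm b
    have h2 : Ψ y ∈ MHomZ F n (c.1 + c.2) := MHom_le_MHomZ (hc y hyb)
    have hΩy : Ω y ∈ MHomZ F n i := by
      have : Ω y ∈ Ω '' (MHomZ F n i : Set (MelV n F)) := Set.mem_image_of_mem _ hyi
      rwa [hΩ1 i] at this
    have h3 : Ψ y - Ω y ∈ Mfilt F n (i + 1) := by
      rw [hcomp]; exact hΦ1 i (Ω y) hΩy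
    by_cases hci : c.1 + c.2 = i
    · rwa [hci] at h2
    · exfalso
      have e1 : projZ i (Ψ y) = 0 := projZ_eq_zero (fun h => hci h.symm) h2
      have e2 : projZ i (Ψ y - Ω y) = 0 := projZ_eq_zero_of_filt (by omega) h3
      have e3 : projZ i (Ω y) = Ω y := projZ_eq_self hΩy
      have e4 : projZ i (Ψ y - Ω y) = projZ i (Ψ y) - projZ i (Ω y) := fproj_sub _ _ _ _ _
      have hΩy0 : Ω y = 0 := by
        rw [e1, e2, e3] at e4
        rwa [eq_comm, zero_sub, neg_eq_zero] at e4
      exact hy0 (hΩ.1.1 (by rw [hΩy0, hΩ0]))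
  -- Step 2: Ψ maps MHomZ i into itself.
  have psi_maps : ∀ (i : ℤ) (y : MelV n F), y ∈ MHomZ F n i → Ψ y ∈ MHomZ F n i := by
    intro i y hy
    have hdec : Ψ y = ∑ b ∈ degSetB y, Ψ (projB b y) := by
      conv_lhs => rw [← sum_projB y]
      exact aut_sum hΨ _ _
    rw [hdec]
    exact Submodule.sum_mem _ fun b _ => key b i _ (projB_mem b y) (projB_memZ hy b)
  -- Step 3: image equality on each MHomZ i.
  have psi_im : ∀ i : ℤ, Ψ '' (MHomZ F n i : Set (MelV n F)) = (MHomZ F n i : Set (MelV n F)) := by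
    intro i
    apply Set.Subset.antisymm
    · rintro _ ⟨y, hy, rfl⟩
      exact psi_maps i y hy
    · intro z hz
      obtain ⟨y, rfl⟩ := hΨ.1.2 z
      have hdec : Ψ y = ∑ j ∈ insert i (degSetZ y), Ψ (projZ j y) := by
        conv_lhs => rw [← sum_projZ y (insert i (degSetZ y)) (Finset.subset_insert _ _)]
        exact aut_sum hΨ _ _
      have hmain : Ψ y = Ψ (projZ i y) := by
        calc Ψ y = projZ i (Ψ y) := (projZ_eq_self hz).symm
          _ = ∑ j ∈ insert i (degSetZ y), projZ i (Ψ (projZ j y)) := by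
              rw [hdec]; exact fproj_sum _ _ _ _ _
          _ = Ψ (projZ i y) := by
              rw [Finset.sum_eq_single_of_mem i (Finset.mem_insert_self _ _)]
              · exact projZ_eq_self (psi_maps i _ (projZ_mem i y))
              · intro j hj hji
                exact projZ_eq_zero (fun h => hji h.symm) (psi_maps j _ (projZ_mem j y))
      exact ⟨projZ i y, projZ_mem i y, hmain.symm⟩
  -- Step 4: Φ = id.
  have phi_hom : ∀ (j : ℤ) (w : MelV n F), w ∈ MHomZ F n j → Φ w = w := by
    intro j w hw
    obtain ⟨x, hx, hΩx⟩ : ∃ x, x ∈ MHomZ F n j ∧ Ω x = w := by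
      have : w ∈ Ω '' (MHomZ F n j : Set (MelV n F)) := by rw [hΩ1 j]; exact hw
      obtain ⟨x, hx1, hx2⟩ := this
      exact ⟨x, hx1, hx2⟩
    have h1 : Φ w ∈ MHomZ F n j := by
      have : Φ w = Ψ x := by rw [hcomp, Function.comp_apply, hΩx]
      rw [this]
      exact psi_maps j x hx
    have h0 : Φ w - w = 0 :=
      MHomZ_inf_Mfilt (by omega) (sub_mem h1 hw) (hΦ1 j w hw)
    exact sub_eq_zero.mp h0
  have phi_id : Φ = id := by
    funext y
    have hdec : ∑ j ∈ degSetZ y, projZ j y = y :=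
      sum_projZ y _ (Finset.Subset.refl _)
    calc Φ y = Φ (∑ j ∈ degSetZ y, projZ j y) := by rw [hdec]
      _ = ∑ j ∈ degSetZ y, Φ (projZ j y) := aut_sum hΦ _ _
      _ = ∑ j ∈ degSetZ y, projZ j y :=
          Finset.sum_congr rfl fun j _ => phi_hom j _ (projZ_mem j y)
      _ = y := hdec
  -- Step 5: W part.
  have wEq : Ψ '' (WsubM F n : Set (MelV n F)) = (WsubM F n : Set (MelV n F)) := by
    apply Set.Subset.antisymm
    · rintro _ ⟨y, hy, rfl⟩
      have hdec : Ψ y = ∑ j ∈ degSetZ y, Ψ (projZ j y) := by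
        conv_lhs => rw [← sum_projZ y _ (Finset.Subset.refl _)]
        exact aut_sum hΨ _ _
      rw [hdec]
      refine Submodule.sum_mem _ fun j _ => ?_
      by_cases h3 : (3 : ℤ) ∣ j
      · exact MHomZ_le_W h3 (psi_maps j _ (projZ_mem j y))
      · rw [W_inter h3 (projZ_W hy j) (projZ_mem j y), hΨ0]
        exact zero_mem _
    · intro z hz
      have hx : ∀ j ∈ degSetZ z, ∃ x, x ∈ WsubM F n ∧ Ψ x = projZ j z := by
        intro j _
        by_cases h3 : (3 : ℤ) ∣ j
        · have : projZ j z ∈ Ψ '' (MHomZ F n j : Set (MelV n F)) := by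
            rw [psi_im j]; exact projZ_mem j z
          obtain ⟨x, hx1, hx2⟩ := this
          exact ⟨x, MHomZ_le_W h3 hx1, hx2⟩
        · exact ⟨0, zero_mem _, by
            rw [hΨ0, W_inter h3 (projZ_W hz j) (projZ_mem j z)]⟩
      choose x hx1 hx2 using hx
      refine ⟨∑ j ∈ (degSetZ z).attach, x j.1 j.2, ?_, ?_⟩
      · exact Submodule.sum_mem _ fun j _ => hx1 j.1 j.2
      · rw [aut_sum hΨ]
        calc ∑ j ∈ (degSetZ z).attach, Ψ (x j.1 j.2)
            = ∑ j ∈ (degSetZ z).attach, projZ j.1 z :=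
              Finset.sum_congr rfl fun j _ => hx2 j.1 j.2
          _ = ∑ j ∈ degSetZ z, projZ j z := Finset.sum_attach _ (fun j => projZ j z)
          _ = z := sum_projZ z _ (Finset.Subset.refl _)
  exact ⟨phi_id, psi_im, wEq⟩
end
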